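/- arXiv:2303.03348 — 3 statements merged into one kernel-verified Lean document; each statement's English description precedes it below -/
import Mathlib

section
/- Let the posterior normal-gamma parameters be defined by recurrences Λ_n = Λ_{n-1} + a aᵀ, u_n = Λ_n^{-1}(x_n a + Λ_{n-1} u_{n-1}), α_n = α_{n-1} + 1/2, β_n = β_{n-1} + (1/2)(x_n² + u_{n-1}ᵀ Λ_{n-1} u_{n-1} - u_nᵀ Λ_n u_n), with a ∈ ℝ^d satisfying aᵀa = 1 and initial values u₁ = x₁ a, Λ₁ = I_d, α₁ = 1/2, β₁ given. Then for all n ≥ 1: Λ_n = I_d + (n-1) a aᵀ, u_n = n·μ̂_n·Λ_n^{-1} a, α_n = n/2, and β_n = β₁ + (1/2)·Σ_{i=1}^n (x_i - μ̂_n)², where μ̂_n = (1/n)Σ_{i=1}^n x_i. -/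
open Matrix Finset

lemma aux1 {d : ℕ} (a b v : Fin d → ℝ) : vecMulVec a b *ᵥ v = (b ⬝ᵥ v) • a := by
  ext i
  simp [mulVec, vecMulVec_apply, dotProduct, Finset.sum_mul, Finset.mul_sum]
  congr 1; ext j; ring

lemma aux2 {d : ℕ} (a b c e : Fin d → ℝ) :
    vecMulVec a b * vecMulVec c e = (b ⬝ᵥ c) • vecMulVec a e := by
  ext i j
  simp [mul_apply, vecMulVec_apply, dotProduct, Finset.sum_mul, Finset.mul_sum]
  congr 1; ext k; ring

lemma aux3 (n : ℕ) (hn : 1 ≤ n) (x : ℕ → ℝ) :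
    ∑ i ∈ Icc 1 n, (x i - (1/(n:ℝ)) * ∑ j ∈ Icc 1 n, x j)^2
      = (∑ i ∈ Icc 1 n, (x i)^2) - (∑ i ∈ Icc 1 n, x i)^2 / n := by
  have hn0 : (n:ℝ) ≠ 0 := Nat.cast_ne_zero.mpr (by omega)
  have hcard : (Icc 1 n).card = n := by simp [Nat.Icc_eq_range', Nat.card_Icc]
  set S := ∑ j ∈ Icc 1 n, x j with hS
  have : ∀ i, (x i - (1/(n:ℝ)) * S)^2 = (x i)^2 - (2 * S / n) * x i + (S/n)^2 := by
    intro i; field_simp; ring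
  simp only [this, Finset.sum_add_distrib, Finset.sum_sub_distrib, ← Finset.mul_sum,
    Finset.sum_const, hcard, nsmul_eq_mul]
  field_simp
  ring

lemma aux4 {d : ℕ} (a : Fin d → ℝ) (ha : a ⬝ᵥ a = 1) (c : ℝ) (hc : 1 + c ≠ 0) :
    (1 + c • vecMulVec a a) * (1 - (c/(1+c)) • vecMulVec a a) = 1 := by
  have hM : vecMulVec a a * vecMulVec a a = vecMulVec a a := by rw [aux2, ha, one_smul]
  have key : c - c/(1+c) - c*(c/(1+c)) = 0 := by field_simp; ring
  have expand : (1 + c • vecMulVec a a) * (1 - (c/(1+c)) • vecMulVec a a)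
      = 1 + (c - c/(1+c) - c*(c/(1+c))) • vecMulVec a a := by
    simp only [mul_sub, add_mul, mul_one, one_mul, smul_mul_assoc, Matrix.mul_smul, hM,
      smul_smul, sub_smul, add_smul]
    abel
  rw [expand, key, zero_smul, add_zero]

lemma aux5 {d : ℕ} (a : Fin d → ℝ) (ha : a ⬝ᵥ a = 1) (c : ℝ) (hc : 1 + c ≠ 0) :
    (1 + c • vecMulVec a a)⁻¹ = 1 - (c/(1+c)) • vecMulVec a a :=
  Matrix.inv_eq_right_inv (aux4 a ha c hc)

lemma aux6 {d : ℕ} (a : Fin d → ℝ) (ha : a ⬝ᵥ a = 1) (c : ℝ) (hc : 1 + c ≠ 0) :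
    (1 + c • vecMulVec a a)⁻¹ *ᵥ a = (1/(1+c)) • a := by
  rw [aux5 a ha c hc, sub_mulVec, one_mulVec, smul_mulVec, aux1, ha, one_smul]
  ext i
  simp [Pi.smul_apply, sub_eq_iff_eq_add]
  field_simp

lemma aux7 {d : ℕ} (a : Fin d → ℝ) (ha : a ⬝ᵥ a = 1) (c : ℝ) :
    (1 + c • vecMulVec a a) *ᵥ a = (1+c) • a := by
  rw [add_mulVec, one_mulVec, smul_mulVec, aux1, ha, one_smul, add_smul, one_smul]

/-- Closed-form solution for the normal-gamma posterior parameter recurrences. -/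
theorem posterior_update_formula (d : ℕ) (a : Fin d → ℝ) (ha : a ⬝ᵥ a = 1)
    (x : ℕ → ℝ) (Λ : ℕ → Matrix (Fin d) (Fin d) ℝ) (u : ℕ → Fin d → ℝ)
    (α β : ℕ → ℝ)
    (hΛ1 : Λ 1 = 1) (hu1 : u 1 = x 1 • a) (hα1 : α 1 = 1 / 2)
    (hΛ : ∀ n ≥ 1, Λ (n + 1) = Λ n + vecMulVec a a)
    (hu : ∀ n ≥ 1, u (n + 1) = (Λ (n + 1))⁻¹ *ᵥ (x (n + 1) • a + Λ n *ᵥ u n))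
    (hα : ∀ n ≥ 1, α (n + 1) = α n + 1 / 2)
    (hβ : ∀ n ≥ 1, β (n + 1) = β n + (1 / 2) *
      ((x (n + 1)) ^ 2 + u n ⬝ᵥ (Λ n *ᵥ u n) - u (n + 1) ⬝ᵥ (Λ (n + 1) *ᵥ u (n + 1)))) :
    ∀ n ≥ 1,
      Λ n = 1 + ((n : ℝ) - 1) • vecMulVec a a ∧
      u n = ((n : ℝ) * ((1 / (n : ℝ)) * ∑ i ∈ Icc 1 n, x i)) • ((Λ n)⁻¹ *ᵥ a) ∧
      α n = (n : ℝ) / 2 ∧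
      β n = β 1 + (1 / 2) *
        ∑ i ∈ Icc 1 n, (x i - (1 / (n : ℝ)) * ∑ j ∈ Icc 1 n, x j) ^ 2 := by
  intro n hn
  induction n, hn using Nat.le_induction with
  | base =>
    refine ⟨by simp [hΛ1], ?_, by simp [hα1], by simp⟩
    have h1 : ((1 : Matrix (Fin d) (Fin d) ℝ))⁻¹ = 1 := Matrix.inv_eq_right_inv (by simp)
    simp [hu1, hΛ1, h1, Matrix.one_mulVec]
  | succ n hn IH =>
    obtain ⟨hΛn, hun, hαn, hβn⟩ := IH
    have hn0 : (n:ℝ) ≠ 0 := Nat.cast_ne_zero.mpr (by omega)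
    have hn1 : (n:ℝ) + 1 ≠ 0 := by positivity
    have e1 : (1:ℝ) + ((n:ℝ) - 1) = n := by ring
    -- Λ at n+1
    have hΛn1 : Λ (n + 1) = 1 + ((n:ℝ)) • vecMulVec a a := by
      rw [hΛ n hn, hΛn, add_assoc, sub_smul, one_smul, sub_add_cancel]
    have hΛn1' : Λ (n + 1) = 1 + ((((n+1 : ℕ)):ℝ) - 1) • vecMulVec a a := by
      rw [show (((n+1:ℕ)):ℝ) - 1 = (n:ℝ) by push_cast; ring]; exact hΛn1
    -- inverses acting on a
    have hinvn : (Λ n)⁻¹ *ᵥ a = (1/(n:ℝ)) • a := by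
      have := aux6 a ha ((n:ℝ) - 1) (by rw [e1]; exact hn0)
      rw [e1] at this; rw [hΛn, this]
    have hinvn1 : (Λ (n+1))⁻¹ *ᵥ a = (1/((n:ℝ)+1)) • a := by
      have := aux6 a ha (n:ℝ) (by rw [add_comm]; exact hn1)
      rw [hΛn1, this, show (1:ℝ) + (n:ℝ) = (n:ℝ) + 1 by ring]
    have hΛa : Λ n *ᵥ a = (n:ℝ) • a := by
      have := aux7 a ha ((n:ℝ) - 1); rw [e1] at this; rw [hΛn, this]
    have hΛa1 : Λ (n+1) *ᵥ a = ((n:ℝ)+1) • a := by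
      rw [hΛn1, aux7 a ha (n:ℝ), show (1:ℝ) + (n:ℝ) = (n:ℝ) + 1 by ring]
    -- sums
    set Sn := ∑ i ∈ Icc 1 n, x i with hSn
    have hSsplit : ∑ i ∈ Icc 1 (n+1), x i = Sn + x (n+1) :=
      Finset.sum_Icc_succ_top (by omega) x
    have hQsplit : ∑ i ∈ Icc 1 (n+1), (x i)^2 = (∑ i ∈ Icc 1 n, (x i)^2) + (x (n+1))^2 :=
      Finset.sum_Icc_succ_top (by omega) _
    -- simplified u n
    have hun' : u n = ((Sn / (n:ℝ))) • a := by
      rw [hun, hinvn, smul_smul]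
      congr 1
      field_simp
    have hΛun : Λ n *ᵥ u n = Sn • a := by
      rw [hun', Matrix.mulVec_smul, hΛa, smul_smul]
      congr 1
      field_simp
    -- u at n+1
    have hun1' : u (n+1) = ((Sn + x (n+1)) / ((n:ℝ)+1)) • a := by
      rw [hu n hn, hΛun]
      rw [show x (n+1) • a + Sn • a = (x (n+1) + Sn) • a by rw [← add_smul]]
      rw [Matrix.mulVec_smul, hinvn1, smul_smul]
      congr 1
      field_simp
      ring
    have hugoal : u (n+1) = ((((n:ℕ)+1 : ℕ) : ℝ) * ((1 / (((n:ℕ)+1:ℕ) : ℝ)) *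
        ∑ i ∈ Icc 1 (n+1), x i)) • ((Λ (n+1))⁻¹ *ᵥ a) := by
      rw [hun1', hinvn1, hSsplit, smul_smul]
      congr 1
      push_cast
      field_simp
    -- quadratic forms
    have hq : u n ⬝ᵥ (Λ n *ᵥ u n) = Sn^2 / n := by
      rw [hΛun, hun', smul_dotProduct, dotProduct_smul, ha]
      simp only [smul_eq_mul]
      field_simp
    have hΛun1 : Λ (n+1) *ᵥ u (n+1) = (Sn + x (n+1)) • a := by
      rw [hun1', Matrix.mulVec_smul, hΛa1, smul_smul]
      congr 1
      field_simp
    have hq1 : u (n+1) ⬝ᵥ (Λ (n+1) *ᵥ u (n+1)) = (Sn + x (n+1))^2 / ((n:ℝ)+1) := by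
      rw [hΛun1, hun1', smul_dotProduct, dotProduct_smul, ha]
      simp only [smul_eq_mul]
      field_simp
    refine ⟨hΛn1', hugoal, ?_, ?_⟩
    · rw [hα n hn, hαn]; push_cast; ring
    · rw [hβ n hn, hβn, hq, hq1, aux3 n hn x, aux3 (n+1) (by omega) x, hQsplit, hSsplit]
      push_cast
      field_simp
      ring
end

section
/- Let U be a chi-squared random variable with D degrees of freedom. Then for any x > 0, P(U - D ≥ 2√(Dx) + 2x) ≤ exp(-x). -/
open MeasureTheory ProbabilityTheory Real

private lemma lm_deriv_aux (w : ℝ) (hw0 : 0 < w) :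
    HasDerivAt (fun w : ℝ => w - w⁻¹ - 2 * Real.log w) (1 - (-(w^2)⁻¹) - 2 * w⁻¹) w :=
  ((hasDerivAt_id' (x := w)).sub (hasDerivAt_inv hw0.ne')).sub
    ((Real.hasDerivAt_log hw0.ne').const_mul 2)

private lemma lm_two_log_le (y : ℝ) (hy : 1 ≤ y) : 2 * Real.log y ≤ y - y⁻¹ := by
  have hsub : Set.Ici (1:ℝ) ⊆ {0}ᶜ := by
    intro z hz
    simp only [Set.mem_compl_iff, Set.mem_singleton_iff]
    have : (1:ℝ) ≤ z := hz
    intro h; rw [h] at this; linarith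
  have key : MonotoneOn (fun w : ℝ => w - w⁻¹ - 2 * Real.log w) (Set.Ici 1) := by
    apply monotoneOn_of_deriv_nonneg (convex_Ici 1)
    · exact (continuousOn_id.sub (continuousOn_inv₀.mono hsub)).sub
        (continuousOn_const.mul (Real.continuousOn_log.mono hsub))
    · intro w hw
      rw [interior_Ici] at hw
      have hw0 : (0:ℝ) < w := lt_trans one_pos hw
      exact (lm_deriv_aux w hw0).differentiableAt.differentiableWithinAt
    · intro w hw
      rw [interior_Ici] at hw
      have hw0 : (0:ℝ) < w := lt_trans one_pos hw
      rw [(lm_deriv_aux w hw0).deriv]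
      have h2 : (w^2)⁻¹ = w⁻¹ * w⁻¹ := by rw [sq, mul_inv]
      nlinarith [sq_nonneg (1 - w⁻¹)]
  have h0 : (fun w : ℝ => w - w⁻¹ - 2 * Real.log w) 1 ≤
      (fun w : ℝ => w - w⁻¹ - 2 * Real.log w) y :=
    key (Set.self_mem_Ici) hy hy
  simp only [Real.log_one, inv_one] at h0
  linarith

private lemma lm_log_le (s : ℝ) (hs : 0 ≤ s) :
    Real.log (1 + 2*s) ≤ (2*s + 2*s^2) / (1 + 2*s) := by
  have h1 : (0:ℝ) < 1 + 2*s := by linarith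
  have := lm_two_log_le (1 + 2*s) (by linarith)
  have hinv : (1 + 2*s) - (1 + 2*s)⁻¹ = (4*s + 4*s^2) / (1 + 2*s) := by
    field_simp; ring
  rw [hinv] at this
  have h2 : (4*s + 4*s^2) / (1 + 2*s) = 2 * ((2*s + 2*s^2) / (1 + 2*s)) := by ring
  linarith

private lemma lm_mgf (a r t : ℝ) (ha : 0 < a) (hr : 0 < r) (htr : t < r) :
    ∫⁻ u, ENNReal.ofReal (Real.exp (t*u)) * gammaPDF a r u =
      ENNReal.ofReal ((r/(r-t)) ^ a) := by
  have hrt : (0:ℝ) < r - t := by linarith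
  have hpt : ∀ u : ℝ, ENNReal.ofReal (Real.exp (t*u)) * gammaPDF a r u =
      ENNReal.ofReal ((r/(r-t)) ^ a) * gammaPDF a (r-t) u := by
    intro u
    rcases lt_or_ge u 0 with hu | hu
    · rw [gammaPDF_of_neg hu, gammaPDF_of_neg hu, mul_zero, mul_zero]
    · rw [gammaPDF_of_nonneg hu, gammaPDF_of_nonneg hu,
        ← ENNReal.ofReal_mul (Real.exp_nonneg _),
        ← ENNReal.ofReal_mul (by positivity)]
      congr 1
      have h1 : Real.exp (t*u) * Real.exp (-(r*u)) = Real.exp (-((r-t)*u)) := by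
        rw [← Real.exp_add]; ring_nf
      have h2 : (r/(r-t))^a * (r-t)^a = r^a := by
        rw [← Real.mul_rpow (by positivity) hrt.le, div_mul_cancel₀ _ hrt.ne']
      calc Real.exp (t*u) * (r ^ a / Real.Gamma a * u ^ (a-1) * Real.exp (-(r * u)))
          = (r^a) / Real.Gamma a * u ^ (a-1) * (Real.exp (t*u) * Real.exp (-(r*u))) := by ring
        _ = ((r/(r-t))^a * (r-t)^a) / Real.Gamma a * u ^ (a-1) * Real.exp (-((r-t)*u)) := by
            rw [h1, h2]
        _ = (r/(r-t))^a * ((r-t) ^ a / Real.Gamma a * u ^ (a-1) * Real.exp (-((r-t) * u))) := by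
            ring
  simp_rw [hpt]
  have hm : Measurable (gammaPDF a (r-t)) := (measurable_gammaPDFReal a (r-t)).ennreal_ofReal
  rw [lintegral_const_mul _ hm, lintegral_gammaPDF_eq_one ha hrt, mul_one]

private lemma lm_chernoff (a r t c : ℝ) (ha : 0 < a) (hr : 0 < r) (ht0 : 0 ≤ t)
    (htr : t < r) :
    gammaMeasure a r {u | c ≤ u} ≤
      ENNReal.ofReal (Real.exp (-(t*c)) * (r/(r-t)) ^ a) := by
  have hset : {u : ℝ | c ≤ u} = Set.Ici c := rfl
  rw [gammaMeasure, hset, withDensity_apply _ measurableSet_Ici]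
  have hmono : ∫⁻ u in Set.Ici c, gammaPDF a r u ≤
      ∫⁻ u in Set.Ici c, ENNReal.ofReal (Real.exp (-(t*c))) *
        (ENNReal.ofReal (Real.exp (t*u)) * gammaPDF a r u) := by
    apply setLIntegral_mono' measurableSet_Ici
    intro u hu
    have h1 : (1:ℝ) ≤ Real.exp (-(t*c)) * Real.exp (t*u) := by
      rw [← Real.exp_add]
      have : (0:ℝ) ≤ -(t*c) + t*u := by
        have := mul_le_mul_of_nonneg_left (Set.mem_Ici.mp hu) ht0
        nlinarith
      calc (1:ℝ) = Real.exp 0 := (Real.exp_zero).symm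
        _ ≤ _ := Real.exp_le_exp.mpr this
    calc gammaPDF a r u = 1 * gammaPDF a r u := (one_mul _).symm
      _ ≤ (ENNReal.ofReal (Real.exp (-(t*c))) * ENNReal.ofReal (Real.exp (t*u))) *
          gammaPDF a r u := by
          apply mul_le_mul_left
          rw [← ENNReal.ofReal_mul (Real.exp_nonneg _), ← ENNReal.ofReal_one]
          exact ENNReal.ofReal_le_ofReal h1
      _ = _ := by rw [mul_assoc]
  calc ∫⁻ u in Set.Ici c, gammaPDF a r u
      ≤ ∫⁻ u in Set.Ici c, ENNReal.ofReal (Real.exp (-(t*c))) *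
        (ENNReal.ofReal (Real.exp (t*u)) * gammaPDF a r u) := hmono
    _ ≤ ∫⁻ u, ENNReal.ofReal (Real.exp (-(t*c))) *
        (ENNReal.ofReal (Real.exp (t*u)) * gammaPDF a r u) :=
        setLIntegral_le_lintegral _ _
    _ = ENNReal.ofReal (Real.exp (-(t*c))) *
        ∫⁻ u, ENNReal.ofReal (Real.exp (t*u)) * gammaPDF a r u := by
        rw [lintegral_const_mul]
        exact (Real.measurable_exp.comp (measurable_const_mul t)).ennreal_ofReal.mul
          ((measurable_gammaPDFReal a r).ennreal_ofReal)
    _ = ENNReal.ofReal (Real.exp (-(t*c))) * ENNReal.ofReal ((r/(r-t)) ^ a) := by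
        rw [lm_mgf a r t ha hr htr]
    _ = _ := by rw [← ENNReal.ofReal_mul (Real.exp_nonneg _)]

/-- Laurent–Massart concentration for a chi-squared variable with `D` degrees of freedom,
realized as the Gamma distribution with shape `D/2` and rate `1/2`. -/
theorem chi_squared_laurent_massart (D : ℕ) (hD : 1 ≤ D) (x : ℝ) (hx : 0 < x) :
    (gammaMeasure ((D : ℝ) / 2) (1 / 2))
        {u | u - (D : ℝ) ≥ 2 * Real.sqrt ((D : ℝ) * x) + 2 * x} ≤
      ENNReal.ofReal (Real.exp (-x)) := by
  have hD0 : (0:ℝ) < D := by exact_mod_cast hD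
  set s : ℝ := Real.sqrt (x / D) with hs_def
  have hs : 0 < s := Real.sqrt_pos.mpr (by positivity)
  have hs2 : s^2 = x / D := Real.sq_sqrt (by positivity)
  have hxD : x = D * s^2 := by rw [hs2]; field_simp
  have hsqrt : Real.sqrt ((D:ℝ) * x) = D * s := by
    rw [hxD]
    rw [show (D:ℝ) * ((D:ℝ) * s^2) = ((D:ℝ)*s)^2 by ring]
    exact Real.sqrt_sq (by positivity)
  have h1s : (0:ℝ) < 1 + 2*s := by linarith
  set t : ℝ := s / (1 + 2*s) with ht_def
  have ht0 : 0 ≤ t := by positivity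
  have htr : t < 1/2 := by
    rw [ht_def, div_lt_div_iff₀ h1s (by norm_num)]
    linarith
  set c : ℝ := (D:ℝ) + 2 * Real.sqrt ((D:ℝ) * x) + 2 * x with hc_def
  have hset : {u : ℝ | u - (D : ℝ) ≥ 2 * Real.sqrt ((D : ℝ) * x) + 2 * x} = {u : ℝ | c ≤ u} := by
    ext u
    simp only [Set.mem_setOf_eq, ge_iff_le, hc_def]
    constructor <;> intro h <;> linarith
  rw [hset]
  refine le_trans (lm_chernoff ((D:ℝ)/2) (1/2) t c (by positivity) (by norm_num) ht0 htr) ?_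
  have hrt : (1:ℝ)/2 - t = 1 / (2*(1+2*s)) := by
    rw [ht_def]; field_simp; ring
  have hratio : (1:ℝ)/2 / (1/2 - t) = 1 + 2*s := by
    rw [hrt]; field_simp
  rw [hratio]
  apply ENNReal.ofReal_le_ofReal
  rw [Real.rpow_def_of_pos h1s, ← Real.exp_add, Real.exp_le_exp]
  have hL := lm_log_le s hs.le
  have hc : c = (D:ℝ) * (1 + 2*s + 2*s^2) := by
    rw [hc_def, hsqrt, hxD]; ring
  rw [hc, ht_def, hxD]
  have key : -(s / (1 + 2*s) * ((D:ℝ) * (1 + 2*s + 2*s^2))) + (D:ℝ)/2 * Real.log (1+2*s)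
      ≤ -((D:ℝ) * s^2) := by
    have h2 : s / (1 + 2*s) * ((D:ℝ) * (1 + 2*s + 2*s^2)) =
        (D:ℝ) * (s * (1 + 2*s + 2*s^2)) / (1 + 2*s) := by ring
    have h3 : (D:ℝ)/2 * Real.log (1+2*s) ≤ (D:ℝ)/2 * ((2*s + 2*s^2) / (1 + 2*s)) :=
      mul_le_mul_of_nonneg_left hL (by positivity)
    have h4 : (D:ℝ)/2 * ((2*s + 2*s^2) / (1 + 2*s)) -
        (D:ℝ) * (s * (1 + 2*s + 2*s^2)) / (1 + 2*s) = -((D:ℝ) * s^2) := by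
      field_simp; ring
    linarith
  linarith [key]
end

section
/- Let events and random variables be given at time t: Q₁, …, Q_K are mutually independent real random variables, Q₁ has a continuous distribution, b ∈ ℝ, p = P(Q₁ > b) > 0, and B is the event {Q_k ≤ b} for a fixed index k ≠ 1. Let A denote the event {Q_i ≤ Q_k for all i} (arm k is chosen) and A' the event {Q_i ≤ Q₁ for all i} (arm 1 is chosen). Then P(A ∩ B) ≤ ((1-p)/p)·P(A' ∩ B). -/
open MeasureTheory ProbabilityTheory

/-- Agrawal-Goyal type inequality: arm `⟨0⟩` plays the role of the optimal arm 1. -/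
theorem choice_prob_bound {Ω : Type*} [MeasureSpace Ω] [IsProbabilityMeasure (ℙ : Measure Ω)]
    (K : ℕ) (hK : 1 ≤ K) (Q : Fin K → Ω → ℝ)
    (hmeas : ∀ i, Measurable (Q i))
    (hindep : iIndepFun Q ℙ)
    (hcont : ∀ r : ℝ, ℙ {ω | Q ⟨0, hK⟩ ω = r} = 0)
    (b : ℝ) (k : Fin K) (hk : k ≠ ⟨0, hK⟩)
    (p : ℝ) (hp : p = (ℙ {ω | Q ⟨0, hK⟩ ω > b}).toReal) (hp0 : 0 < p) :
    (ℙ ({ω | ∀ i, Q i ω ≤ Q k ω} ∩ {ω | Q k ω ≤ b})).toReal ≤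
      ((1 - p) / p) *
        (ℙ ({ω | ∀ i, Q i ω ≤ Q ⟨0, hK⟩ ω} ∩ {ω | Q k ω ≤ b})).toReal := by
  set o : Fin K := ⟨0, hK⟩ with ho
  set S : Fin K → Set Ω := fun i => {ω | Q i ω ≤ b} with hS
  set T : Fin K → Set Ω := fun i => if i = o then {ω | b < Q o ω} else S i with hT
  have hScm : ∀ i, MeasurableSet[(inferInstance : MeasurableSpace ℝ).comap (Q i)] (S i) :=
    fun i => ⟨Set.Iic b, measurableSet_Iic, rfl⟩
  have hTcm : ∀ i, MeasurableSet[(inferInstance : MeasurableSpace ℝ).comap (Q i)] (T i) := by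
    intro i
    by_cases h : i = o
    · subst h; simp only [hT, if_pos rfl]
      exact ⟨Set.Ioi b, measurableSet_Ioi, rfl⟩
    · simp only [hT, if_neg h]; exact hScm i
  have hSprod : ℙ (⋂ i, S i) = ∏ i, ℙ (S i) := hindep.meas_iInter hScm
  have hTprod : ℙ (⋂ i, T i) = ∏ i, ℙ (T i) := hindep.meas_iInter hTcm
  -- split products at o
  have hSsplit : ∏ i, ℙ (S i) = ℙ (S o) * ∏ i ∈ Finset.univ.erase o, ℙ (S i) :=
    (Finset.mul_prod_erase Finset.univ _ (Finset.mem_univ o)).symm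
  have hTsplit : ∏ i, ℙ (T i) = ℙ {ω | b < Q o ω} * ∏ i ∈ Finset.univ.erase o, ℙ (S i) := by
    rw [← Finset.mul_prod_erase Finset.univ _ (Finset.mem_univ o)]
    rw [show T o = {ω | b < Q o ω} from by simp [hT]]
    exact congrArg _ (Finset.prod_congr rfl fun i hi => by
      rw [show T i = S i from by simp [hT, (Finset.mem_erase.mp hi).1]])
  -- complement relation
  have hcompl : S o = {ω | b < Q o ω}ᶜ := by
    ext ω; simp [hS, not_lt]
  have hmeasTo : MeasurableSet {ω | b < Q o ω} := measurableSet_lt measurable_const (hmeas o)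
  have hSo : ℙ (S o) = 1 - ℙ {ω | b < Q o ω} := by
    rw [hcompl]; exact prob_compl_eq_one_sub hmeasTo
  have hple : ℙ {ω | b < Q o ω} ≤ 1 := prob_le_one
  have hpne : ℙ {ω | b < Q o ω} ≠ ⊤ := (lt_of_le_of_lt hple ENNReal.one_lt_top).ne
  have hpdef : (ℙ {ω | b < Q o ω}).toReal = p := hp.symm
  have hSoR : (ℙ (S o)).toReal = 1 - p := by
    rw [hSo, ENNReal.toReal_sub_of_le hple ENNReal.one_ne_top, ENNReal.toReal_one, hpdef]
  -- set c
  set c : ℝ := (∏ i ∈ Finset.univ.erase o, ℙ (S i)).toReal with hc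
  have hc0 : 0 ≤ c := ENNReal.toReal_nonneg
  have hprodne : ∀ (s : Finset (Fin K)), (∏ i ∈ s, ℙ (S i)) ≠ ⊤ := by
    intro s
    exact (ENNReal.prod_lt_top (fun i _ => measure_lt_top _ _)).ne
  -- LHS bound
  have hsub1 : ({ω | ∀ i, Q i ω ≤ Q k ω} ∩ {ω | Q k ω ≤ b}) ⊆ ⋂ i, S i := by
    intro ω hω
    simp only [Set.mem_iInter]
    intro i
    exact le_trans (hω.1 i) hω.2
  have hLHS : (ℙ ({ω | ∀ i, Q i ω ≤ Q k ω} ∩ {ω | Q k ω ≤ b})).toReal ≤ (1 - p) * c := by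
    have h1 : ℙ ({ω | ∀ i, Q i ω ≤ Q k ω} ∩ {ω | Q k ω ≤ b}) ≤ ℙ (⋂ i, S i) :=
      measure_mono hsub1
    have h2 : (ℙ (⋂ i, S i)).toReal = (1 - p) * c := by
      rw [hSprod, hSsplit, ENNReal.toReal_mul, hSoR, hc]
    rw [← h2]
    exact ENNReal.toReal_mono (by rw [hSprod]; exact hprodne _) h1
  -- RHS bound
  have hsub2 : (⋂ i, T i) ⊆ ({ω | ∀ i, Q i ω ≤ Q o ω} ∩ {ω | Q k ω ≤ b}) := by
    intro ω hω
    simp only [Set.mem_iInter] at hω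
    have hωo : b < Q o ω := by have := hω o; simpa [hT] using this
    have hωi : ∀ i, i ≠ o → Q i ω ≤ b := by
      intro i hi; have := hω i; simpa [hT, hS, hi] using this
    refine ⟨fun i => ?_, hωi k hk⟩
    by_cases h : i = o
    · subst h; exact le_refl _
    · exact le_of_lt (lt_of_le_of_lt (hωi i h) hωo)
  have hRHS : p * c ≤ (ℙ ({ω | ∀ i, Q i ω ≤ Q o ω} ∩ {ω | Q k ω ≤ b})).toReal := by
    have h1 : ℙ (⋂ i, T i) ≤ ℙ ({ω | ∀ i, Q i ω ≤ Q o ω} ∩ {ω | Q k ω ≤ b}) :=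
      measure_mono hsub2
    have h2 : (ℙ (⋂ i, T i)).toReal = p * c := by
      rw [hTprod, hTsplit, ENNReal.toReal_mul, hpdef, hc]
    rw [← h2]
    exact ENNReal.toReal_mono (measure_ne_top _ _) h1
  -- combine
  have hp1 : p ≤ 1 := by rw [hp]; exact (ENNReal.toReal_le_of_le_ofReal zero_le_one
    (by simpa using hple))
  calc (ℙ ({ω | ∀ i, Q i ω ≤ Q k ω} ∩ {ω | Q k ω ≤ b})).toReal
      ≤ (1 - p) * c := hLHS
    _ = ((1 - p) / p) * (p * c) := by field_simp
    _ ≤ ((1 - p) / p) * (ℙ ({ω | ∀ i, Q i ω ≤ Q o ω} ∩ {ω | Q k ω ≤ b})).toReal := by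
        apply mul_le_mul_of_nonneg_left hRHS
        exact div_nonneg (by linarith) (le_of_lt hp0)
end
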